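/- Let λ > 0, μ = √(λ²+1), a > 0 with a ≠ 1, and define X : ℝ² → ℝ³ by X(u,v) = ( cosh(a u)·sin(a v)/a + λ·u , [sinh u·((a²−1)·cos v + sinh(a u)·((aμ + λ)·cos v·sin(a v) − (aλ + μ)·sin v·cos(a v))) + cosh u·cosh(a u)·((aμ + λ)·sin v·cos(a v) − (aλ + μ)·cos v·sin(a v))]/(a²−1) , [cosh u·((a²−1)·cos v + sinh(a u)·((aμ + λ)·cos v·sin(a v) − (aλ + μ)·sin v·cos(a v))) + sinh u·cosh(a u)·((aμ + λ)·sin v·cos(a v) − (aλ + μ)·cos v·sin(a v))]/(a²−1) ). Then: (i) each coordinate function of X is harmonic on ℝ² (∂²X_k/∂u² + ∂²X_k/∂v² = 0); (ii) X is Lorentz-conformal, i.e. ⟨X_u,X_u⟩_L = ⟨X_v,X_v⟩_L and ⟨X_u,X_v⟩_L = 0 everywhere; and (iii) X(u,0) = (λ·u, sinh u, cosh u) for all u ∈ ℝ. -/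

import Mathlib

open Real

/-- Lorentzian inner product on ℝ³: ⟨p,q⟩ = p₁q₁ + p₂q₂ − p₃q₃. -/
noncomputable def lorentz (p q : ℝ × ℝ × ℝ) : ℝ :=
  p.1 * q.1 + p.2.1 * q.2.1 - p.2.2 * q.2.2

/-- First coordinate of the helicoidal helicoid over a helix of type II (spacelike axis). -/
noncomputable def X1 (a lam mu u v : ℝ) : ℝ :=
  cosh (a*u) * sin (a*v) / a + lam * u

/-- Second coordinate of the helicoidal helicoid over a helix of type II (spacelike axis). -/
noncomputable def X2 (a lam mu u v : ℝ) : ℝ :=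
  (sinh u * ((a^2 - 1) * cos v
      + sinh (a*u) * ((a * mu + lam) * cos v * sin (a*v)
        - (a * lam + mu) * sin v * cos (a*v)))
   + cosh u * cosh (a*u) * ((a * mu + lam) * sin v * cos (a*v)
        - (a * lam + mu) * cos v * sin (a*v))) / (a^2 - 1)

/-- Third coordinate of the helicoidal helicoid over a helix of type II (spacelike axis). -/
noncomputable def X3 (a lam mu u v : ℝ) : ℝ :=
  (cosh u * ((a^2 - 1) * cos v
      + sinh (a*u) * ((a * mu + lam) * cos v * sin (a*v)
        - (a * lam + mu) * sin v * cos (a*v)))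
   + sinh u * cosh (a*u) * ((a * mu + lam) * sin v * cos (a*v)
        - (a * lam + mu) * cos v * sin (a*v))) / (a^2 - 1)

/-- Partial derivative of X with respect to u. -/
noncomputable def Xu (a lam mu u v : ℝ) : ℝ × ℝ × ℝ :=
  (deriv (fun s => X1 a lam mu s v) u, deriv (fun s => X2 a lam mu s v) u,
   deriv (fun s => X3 a lam mu s v) u)

/-- Partial derivative of X with respect to v. -/
noncomputable def Xv (a lam mu u v : ℝ) : ℝ × ℝ × ℝ :=
  (deriv (fun t => X1 a lam mu u t) v, deriv (fun t => X2 a lam mu u t) v,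
   deriv (fun t => X3 a lam mu u t) v)

/-
The surface is the real part of the holomorphic curve
`F = (potential₁, potential₂, potential₃)` at `z = u + v i`, so each coordinate is harmonic, and
`F' = X_u - i X_v`. Conformality is therefore the complex identity `F₁'² + F₂'² - F₃'² = 0`. In
`F₂' = cosh z + i (λ cosh z cosh az - μ sinh z sinh az)` and the analogous `F₃'`, the hyperbolic
rotation in `z` drops out by `cosh² z - sinh² z = 1`, and what remains vanishes by
`cosh² az - sinh² az = 1` and `μ² = λ² + 1`.
-/

section

-- Opened only in this section: next to `open Real`, it would make `sinh u` ambiguous below.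
open Complex

namespace Complex

theorem sinh_re (z : ℂ) : (sinh z).re = Real.sinh z.re * Real.cos z.im := by
  conv_lhs => rw [← re_add_im z, sinh_add, sinh_mul_I, cosh_mul_I]
  simp [sinh_ofReal_re, cosh_ofReal_re, sin_ofReal_re, cos_ofReal_re, sinh_ofReal_im,
    cosh_ofReal_im, sin_ofReal_im, cos_ofReal_im]

theorem sinh_im (z : ℂ) : (sinh z).im = Real.cosh z.re * Real.sin z.im := by
  conv_lhs => rw [← re_add_im z, sinh_add, sinh_mul_I, cosh_mul_I]
  simp [sinh_ofReal_re, cosh_ofReal_re, sin_ofReal_re, cos_ofReal_re, sinh_ofReal_im,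
    cosh_ofReal_im, sin_ofReal_im, cos_ofReal_im]

theorem cosh_re (z : ℂ) : (cosh z).re = Real.cosh z.re * Real.cos z.im := by
  conv_lhs => rw [← re_add_im z, cosh_add, sinh_mul_I, cosh_mul_I]
  simp [sinh_ofReal_re, cosh_ofReal_re, sin_ofReal_re, cos_ofReal_re, sinh_ofReal_im,
    cosh_ofReal_im, sin_ofReal_im, cos_ofReal_im]

theorem cosh_im (z : ℂ) : (cosh z).im = Real.sinh z.re * Real.sin z.im := by
  conv_lhs => rw [← re_add_im z, cosh_add, sinh_mul_I, cosh_mul_I]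
  simp [sinh_ofReal_re, cosh_ofReal_re, sin_ofReal_re, cos_ofReal_re, sinh_ofReal_im,
    cosh_ofReal_im, sin_ofReal_im, cos_ofReal_im]

end Complex

section RealPartOfHolomorphic

variable {F : ℂ → ℂ} {F' : ℂ} {u v : ℝ}

theorem HasDerivAt.re_comp_horizontal (h : HasDerivAt F F' (u + v * I)) :
    HasDerivAt (fun s : ℝ => (F (s + v * I)).re) F'.re u :=
  (h.comp_add_const (u : ℂ) (v * I)).real_of_complex

theorem HasDerivAt.re_comp_vertical (h : HasDerivAt F F' (u + v * I)) :
    HasDerivAt (fun t : ℝ => (F (u + t * I)).re) (-F'.im) v := by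
  have hline : HasDerivAt (fun w : ℂ => (u : ℂ) + w * I) I v := by
    simpa using ((hasDerivAt_id (v : ℂ)).mul_const I).const_add (u : ℂ)
  simpa using (h.comp (v : ℂ) hline).real_of_complex

theorem DifferentiableAt.deriv_re_comp_horizontal (hF : DifferentiableAt ℂ F (u + v * I)) :
    deriv (fun s : ℝ => (F (s + v * I)).re) u = (deriv F (u + v * I)).re :=
  hF.hasDerivAt.re_comp_horizontal.deriv

theorem DifferentiableAt.deriv_re_comp_vertical (hF : DifferentiableAt ℂ F (u + v * I)) :
    deriv (fun t : ℝ => (F (u + t * I)).re) v = -(deriv F (u + v * I)).im :=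
  hF.hasDerivAt.re_comp_vertical.deriv

theorem re_comp_laplacian_eq_zero (hF : Differentiable ℂ F) (u v : ℝ) :
    deriv (deriv fun s : ℝ => (F (s + v * I)).re) u
      + deriv (deriv fun t : ℝ => (F (u + t * I)).re) v = 0 := by
  have hF' : Differentiable ℂ (fun w => I * deriv F w) := hF.deriv.const_mul I
  have hs : deriv (fun s : ℝ => (F (s + v * I)).re) = fun s : ℝ => (deriv F (s + v * I)).re :=
    funext fun s : ℝ => (hF _).deriv_re_comp_horizontal
  -- `-w.im = (I * w).re`, so the vertical rule applies again, to `I * deriv F`.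
  have ht : deriv (fun t : ℝ => (F (u + t * I)).re)
      = fun t : ℝ => (I * deriv F (u + t * I)).re :=
    funext fun t : ℝ => by rw [I_mul_re]; exact (hF _).deriv_re_comp_vertical
  rw [hs, ht, (hF.deriv _).deriv_re_comp_horizontal, (hF' _).deriv_re_comp_vertical,
    deriv_const_mul _ (hF.deriv _)]
  simp

end RealPartOfHolomorphic

theorem lorentz_conformal_of_isotropic {p q : ℝ × ℝ × ℝ}
    (h : ((p.1 : ℂ) - q.1 * I) ^ 2 + ((p.2.1 : ℂ) - q.2.1 * I) ^ 2
      - ((p.2.2 : ℂ) - q.2.2 * I) ^ 2 = 0) :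
    lorentz p p = lorentz q q ∧ lorentz p q = 0 := by
  have hre := congrArg re h
  have him := congrArg im h
  simp only [sq, sub_re, add_re, mul_re, mul_im, sub_im, add_im, ofReal_re, ofReal_im, I_re, I_im,
    mul_zero, mul_one, sub_zero, add_zero, zero_sub, sub_self, zero_re, zero_im] at hre him
  constructor <;> simp only [lorentz] <;> linarith

section Potential

variable (a lam mu : ℝ)

noncomputable def potential₁ (z : ℂ) : ℂ := lam * z - I * sinh (a * z) / a

-- Written over the common denominator so that `X2 = re potential₂` holds even when `a ^ 2 = 1`.
noncomputable def potential₂ (z : ℂ) : ℂ :=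
  ((a ^ 2 - 1 : ℝ) * sinh z - I * ((a * mu + lam) * (sinh z * cosh (a * z))
    - (a * lam + mu) * (cosh z * sinh (a * z)))) / ((a ^ 2 - 1 : ℝ) : ℂ)

noncomputable def potential₃ (z : ℂ) : ℂ :=
  ((a ^ 2 - 1 : ℝ) * cosh z - I * ((a * mu + lam) * (cosh z * cosh (a * z))
    - (a * lam + mu) * (sinh z * sinh (a * z)))) / ((a ^ 2 - 1 : ℝ) : ℂ)

theorem differentiable_potential₁ : Differentiable ℂ (potential₁ a lam) := by
  unfold potential₁; fun_prop

theorem differentiable_potential₂ : Differentiable ℂ (potential₂ a lam mu) := by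
  unfold potential₂; fun_prop

theorem differentiable_potential₃ : Differentiable ℂ (potential₃ a lam mu) := by
  unfold potential₃; fun_prop

theorem X1_eq_re_potential₁ (u v : ℝ) :
    X1 a lam mu u v = (potential₁ a lam (u + v * I)).re := by
  simp only [X1, potential₁, sub_re, add_re, mul_re, mul_im, div_ofReal_re, sinh_im, ofReal_re,
    ofReal_im, I_re, I_im, add_im, mul_zero, zero_mul, mul_one, sub_zero, add_zero, zero_add]
  ring

theorem X2_eq_re_potential₂ (u v : ℝ) :
    X2 a lam mu u v = (potential₂ a lam mu (u + v * I)).re := by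
  simp only [X2, potential₂, sub_re, add_re, mul_re, mul_im, div_ofReal_re,
    sinh_re, sinh_im, cosh_re, cosh_im, ofReal_re, ofReal_im, I_re, I_im, add_im, sub_im, mul_zero,
    zero_mul, mul_one, sub_zero, add_zero, zero_add]
  ring

theorem X3_eq_re_potential₃ (u v : ℝ) :
    X3 a lam mu u v = (potential₃ a lam mu (u + v * I)).re := by
  simp only [X3, potential₃, sub_re, add_re, mul_re, mul_im, div_ofReal_re,
    sinh_re, sinh_im, cosh_re, cosh_im, ofReal_re, ofReal_im, I_re, I_im, add_im, sub_im, mul_zero,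
    zero_mul, mul_one, sub_zero, add_zero, zero_add]
  ring

theorem hasDerivAt_potential₁ (ha : a ≠ 0) (z : ℂ) :
    HasDerivAt (potential₁ a lam) (lam - I * cosh (a * z)) z := by
  have hsa := ((hasDerivAt_id' z).const_mul (a : ℂ)).csinh
  have ha' : (a : ℂ) ≠ 0 := ofReal_ne_zero.mpr ha
  refine (((hasDerivAt_id' z).const_mul (lam : ℂ)).fun_sub
    ((hsa.const_mul I).div_const (a : ℂ))).congr_deriv ?_
  field_simp

theorem hasDerivAt_potential₂ (hD : a ^ 2 - 1 ≠ 0) (z : ℂ) :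
    HasDerivAt (potential₂ a lam mu)
      (cosh z + I * (lam * (cosh z * cosh (a * z)) - mu * (sinh z * sinh (a * z)))) z := by
  have hsa := ((hasDerivAt_id' z).const_mul (a : ℂ)).csinh
  have hca := ((hasDerivAt_id' z).const_mul (a : ℂ)).ccosh
  have hs := Complex.hasDerivAt_sinh z
  have hc := Complex.hasDerivAt_cosh z
  have hD' : ((a ^ 2 - 1 : ℝ) : ℂ) ≠ 0 := ofReal_ne_zero.mpr hD
  -- The derivative collapses by `(aμ + λ) - a(aλ + μ) = -λ(a² - 1)` and
  -- `a(aμ + λ) - (aλ + μ) = μ(a² - 1)`.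
  refine (((hs.const_mul _).fun_sub ((((hs.fun_mul hca).const_mul (a * mu + lam : ℂ)).fun_sub
    ((hc.fun_mul hsa).const_mul (a * lam + mu : ℂ))).const_mul I)).div_const _).congr_deriv ?_
  field_simp
  push_cast
  ring

theorem hasDerivAt_potential₃ (hD : a ^ 2 - 1 ≠ 0) (z : ℂ) :
    HasDerivAt (potential₃ a lam mu)
      (sinh z + I * (lam * (sinh z * cosh (a * z)) - mu * (cosh z * sinh (a * z)))) z := by
  have hsa := ((hasDerivAt_id' z).const_mul (a : ℂ)).csinh
  have hca := ((hasDerivAt_id' z).const_mul (a : ℂ)).ccosh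
  have hs := Complex.hasDerivAt_sinh z
  have hc := Complex.hasDerivAt_cosh z
  have hD' : ((a ^ 2 - 1 : ℝ) : ℂ) ≠ 0 := ofReal_ne_zero.mpr hD
  refine (((hc.const_mul _).fun_sub ((((hc.fun_mul hca).const_mul (a * mu + lam : ℂ)).fun_sub
    ((hs.fun_mul hsa).const_mul (a * lam + mu : ℂ))).const_mul I)).div_const _).congr_deriv ?_
  field_simp
  push_cast
  ring

theorem isotropic_deriv_potential (ha : a ≠ 0) (hD : a ^ 2 - 1 ≠ 0) (hmu : mu ^ 2 = lam ^ 2 + 1)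
    (z : ℂ) :
    deriv (potential₁ a lam) z ^ 2 + deriv (potential₂ a lam mu) z ^ 2
      - deriv (potential₃ a lam mu) z ^ 2 = 0 := by
  have hmu' : (mu : ℂ) ^ 2 = lam ^ 2 + 1 := by exact_mod_cast hmu
  rw [(hasDerivAt_potential₁ a lam ha z).deriv, (hasDerivAt_potential₂ a lam mu hD z).deriv,
    (hasDerivAt_potential₃ a lam mu hD z).deriv]
  linear_combination
    (1 + 2 * I * lam * cosh (a * z)
        + I ^ 2 * (lam ^ 2 * cosh (a * z) ^ 2 - mu ^ 2 * sinh (a * z) ^ 2))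
      * Complex.cosh_sq_sub_sinh_sq z
    + (lam ^ 2 * cosh (a * z) ^ 2 + cosh (a * z) ^ 2 - mu ^ 2 * sinh (a * z) ^ 2) * I_sq
    - (lam ^ 2 + 1) * Complex.cosh_sq_sub_sinh_sq (a * z) + sinh (a * z) ^ 2 * hmu'

end Potential

end

theorem helicoidal_helicoid_spacelike_typeII_general (a lam mu : ℝ)
    (hmu : mu = Real.sqrt (lam^2 + 1))
    (ha : 0 < a) (ha1 : a ≠ 1) :
    (∀ u v : ℝ,
      deriv (deriv (fun s => X1 a lam mu s v)) u + deriv (deriv (fun t => X1 a lam mu u t)) v = 0 ∧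
      deriv (deriv (fun s => X2 a lam mu s v)) u + deriv (deriv (fun t => X2 a lam mu u t)) v = 0 ∧
      deriv (deriv (fun s => X3 a lam mu s v)) u + deriv (deriv (fun t => X3 a lam mu u t)) v = 0) ∧
    (∀ u v : ℝ,
      lorentz (Xu a lam mu u v) (Xu a lam mu u v) = lorentz (Xv a lam mu u v) (Xv a lam mu u v) ∧
      lorentz (Xu a lam mu u v) (Xv a lam mu u v) = 0) ∧
    (∀ u : ℝ, (X1 a lam mu u 0, X2 a lam mu u 0, X3 a lam mu u 0) = (lam * u, sinh u, cosh u)) := by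
  have hD : a ^ 2 - 1 ≠ 0 := by
    rw [show a ^ 2 - 1 = (a - 1) * (a + 1) by ring]
    exact mul_ne_zero (sub_ne_zero.mpr ha1) (by positivity)
  have hmu2 : mu ^ 2 = lam ^ 2 + 1 := by rw [hmu, sq_sqrt (by positivity)]
  have h₁ := differentiable_potential₁ a lam
  have h₂ := differentiable_potential₂ a lam mu
  have h₃ := differentiable_potential₃ a lam mu
  refine ⟨fun u v => ?_, fun u v => ?_, fun u => ?_⟩
  · simp only [X1_eq_re_potential₁, X2_eq_re_potential₂, X3_eq_re_potential₃]
    exact ⟨re_comp_laplacian_eq_zero h₁ u v, re_comp_laplacian_eq_zero h₂ u v,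
      re_comp_laplacian_eq_zero h₃ u v⟩
  · simp only [Xu, Xv, X1_eq_re_potential₁, X2_eq_re_potential₂, X3_eq_re_potential₃]
    rw [(h₁ _).deriv_re_comp_horizontal, (h₂ _).deriv_re_comp_horizontal,
      (h₃ _).deriv_re_comp_horizontal, (h₁ _).deriv_re_comp_vertical,
      (h₂ _).deriv_re_comp_vertical, (h₃ _).deriv_re_comp_vertical]
    apply lorentz_conformal_of_isotropic
    simpa using isotropic_deriv_potential a lam mu ha.ne' hD hmu2 (u + v * Complex.I)
  · simp [X1, X2, X3, hD]

/-- The helicoidal helicoid over a helix of type II is harmonic, Lorentz-conformal, and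
contains the helix (λu, sinh u, cosh u). -/
theorem helicoidal_helicoid_spacelike_typeII (a lam mu : ℝ)
    (hlam : 0 < lam) (hmu : mu = Real.sqrt (lam^2 + 1))
    (ha : 0 < a) (ha1 : a ≠ 1) :
    (∀ u v : ℝ,
      deriv (deriv (fun s => X1 a lam mu s v)) u + deriv (deriv (fun t => X1 a lam mu u t)) v = 0 ∧
      deriv (deriv (fun s => X2 a lam mu s v)) u + deriv (deriv (fun t => X2 a lam mu u t)) v = 0 ∧
      deriv (deriv (fun s => X3 a lam mu s v)) u + deriv (deriv (fun t => X3 a lam mu u t)) v = 0) ∧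
    (∀ u v : ℝ,
      lorentz (Xu a lam mu u v) (Xu a lam mu u v) = lorentz (Xv a lam mu u v) (Xv a lam mu u v) ∧
      lorentz (Xu a lam mu u v) (Xv a lam mu u v) = 0) ∧
    (∀ u : ℝ, (X1 a lam mu u 0, X2 a lam mu u 0, X3 a lam mu u 0) = (lam * u, sinh u, cosh u)) :=
  helicoidal_helicoid_spacelike_typeII_general a lam mu hmu ha ha1
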